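/- Let Ω ⊆ ℝ^n be open with 0 ∈ Ω^c and A_Ω its auxiliary function. For the product orbit O = O₁ × ⋯ × O_k ⊆ ℝ^d (d = d₁+⋯+d_k) one has A_O(ξ) ≤ A_{O_{j₀}}(ξ_{j₀}) for every component index j₀, and consequently A_O(ξ)^k ≤ ∏_{j=1}^k A_{O_j}(ξ_j). -/

import Mathlib

open Metric

/-- The auxiliary function associated to a subset `O` of a normed space. -/
noncomputable def auxA {E : Type*} [NormedAddCommGroup E] (O : Set E) (ξ : E) : ℝ :=
  min (infDist ξ Oᶜ / (1 + Real.sqrt (‖ξ‖ ^ 2 - infDist ξ Oᶜ ^ 2)))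
    (1 / (1 + ‖ξ‖))

/-- Moving a single coordinate of `x` into `(s i)ᶜ` leaves the product set, at cost exactly the
distance moved in that coordinate. -/
theorem PiLp.infDist_compl_pi_le {p : ENNReal} [Fact (1 ≤ p)] {ι : Type*} [Fintype ι]
    [DecidableEq ι] {β : ι → Type*} [∀ i, SeminormedAddCommGroup (β i)]
    (s : ∀ i, Set (β i)) (x : PiLp p β) (i : ι) (hs : (s i)ᶜ.Nonempty) :
    infDist x {y : PiLp p β | ∀ j, y j ∈ s j}ᶜ ≤ infDist (x i) (s i)ᶜ := by
  refine (le_infDist hs).2 fun y hy => ?_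
  have hmem : x + PiLp.single p i (y - x i) ∈ {y : PiLp p β | ∀ j, y j ∈ s j}ᶜ := fun h =>
    hy (by simpa using h i)
  calc infDist x _ ≤ dist x (x + PiLp.single p i (y - x i)) := infDist_le_dist_of_mem hmem
    _ = dist (x i) y := by rw [dist_self_add_right, PiLp.norm_single, dist_comm, dist_eq_norm]

section auxA

variable {E F : Type*} [NormedAddCommGroup E] [NormedAddCommGroup F]

theorem auxA_nonneg (O : Set E) (ξ : E) : 0 ≤ auxA O ξ :=
  le_min (div_nonneg infDist_nonneg (by positivity)) (by positivity)

theorem auxA_le_auxA {O : Set E} {O' : Set F} {ξ : E} {ξ' : F}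
    (hdist : infDist ξ Oᶜ ≤ infDist ξ' O'ᶜ) (hnorm : ‖ξ'‖ ≤ ‖ξ‖) : auxA O ξ ≤ auxA O' ξ' := by
  have hsq : ‖ξ'‖ ^ 2 - infDist ξ' O'ᶜ ^ 2 ≤ ‖ξ‖ ^ 2 - infDist ξ Oᶜ ^ 2 := by
    have := pow_le_pow_left₀ (norm_nonneg _) hnorm 2
    have := pow_le_pow_left₀ infDist_nonneg hdist 2
    linarith
  refine min_le_min (div_le_div₀ infDist_nonneg hdist (by positivity) ?_)
    (one_div_le_one_div_of_le (by positivity) (by linarith))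
  linarith [Real.sqrt_le_sqrt hsq]

end auxA

theorem auxA_multi_product_estimate_general {k : ℕ} (d : Fin k → ℕ)
    (O : ∀ j, Set (EuclideanSpace ℝ (Fin (d j))))
    (h0 : ∀ j, (0 : EuclideanSpace ℝ (Fin (d j))) ∈ (O j)ᶜ)
    (ξ : PiLp 2 fun j => EuclideanSpace ℝ (Fin (d j))) :
    (∀ j₀ : Fin k,
      auxA {η : PiLp 2 fun j => EuclideanSpace ℝ (Fin (d j)) | ∀ j, η j ∈ O j} ξ
        ≤ auxA (O j₀) (ξ j₀)) ∧
    auxA {η : PiLp 2 fun j => EuclideanSpace ℝ (Fin (d j)) | ∀ j, η j ∈ O j} ξ ^ k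
      ≤ ∏ j, auxA (O j) (ξ j) := by
  have component_le : ∀ j₀, auxA {η : PiLp 2 fun j => EuclideanSpace ℝ (Fin (d j)) |
      ∀ j, η j ∈ O j} ξ ≤ auxA (O j₀) (ξ j₀) := fun j₀ =>
    auxA_le_auxA (PiLp.infDist_compl_pi_le O ξ j₀ ⟨0, h0 j₀⟩) (PiLp.norm_apply_le ξ j₀)
  refine ⟨component_le, ?_⟩
  simpa using Finset.prod_le_prod (s := .univ) (fun _ _ => auxA_nonneg _ _) fun j _ =>
    component_le j

/-- For the product orbit `O = O₁ × ⋯ × O_k` one has `A_O(ξ) ≤ A_{O_{j₀}}(ξ_{j₀})`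
for every component `j₀`, and hence `A_O(ξ)^k ≤ ∏_j A_{O_j}(ξ_j)`. -/
theorem auxA_multi_product_estimate {k : ℕ} (d : Fin k → ℕ)
    (O : ∀ j, Set (EuclideanSpace ℝ (Fin (d j))))
    (hO : ∀ j, IsOpen (O j))
    (h0 : ∀ j, (0 : EuclideanSpace ℝ (Fin (d j))) ∈ (O j)ᶜ)
    (ξ : PiLp 2 fun j => EuclideanSpace ℝ (Fin (d j)))
    (hξ : ∀ j, ξ j ∈ O j) :
    (∀ j₀ : Fin k,
      auxA {η : PiLp 2 fun j => EuclideanSpace ℝ (Fin (d j)) | ∀ j, η j ∈ O j} ξ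
        ≤ auxA (O j₀) (ξ j₀)) ∧
    auxA {η : PiLp 2 fun j => EuclideanSpace ℝ (Fin (d j)) | ∀ j, η j ∈ O j} ξ ^ k
      ≤ ∏ j, auxA (O j) (ξ j) :=
  auxA_multi_product_estimate_general d O h0 ξ
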